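/- arXiv:1307.6502 — 4 statements merged into one kernel-verified Lean document; each statement's English description precedes it below -/
import Mathlib

section
/- Let G be a finite connected graph on n vertices and {S₁,…,S_m} a partition of E(G) such that each S_i is an edge cut whose removal leaves two connected components G_i and G_i', and such that (i) every shortest path between two vertices of G_i avoids S_i, (ii) every shortest path between two vertices of G_i' avoids S_i, and (iii) every shortest path between a vertex of G_i and a vertex of G_i' uses exactly one edge of S_i. Then the Wiener index satisfies W(G) = Σ_{i=1}^m |V(G_i)|·|V(G_i')|. -/
open SimpleGraph Finset

/-! Fix a geodesic `P` from `u` to `v`. Since the cuts partition the edge set, the length of `P` is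
the sum over `i` of the number of edges of `P` in `S i`. By the hypotheses on the cut `S i` this
number is `1` when `u` and `v` lie on different sides of it and `0` otherwise, so `d(u, v)` counts
the cuts separating `u` and `v`. Summing over all ordered pairs, the cut `S i` contributes
`2 |A i| |B i|`. -/

theorem List.length_eq_sum_countP_of_existsUnique {α ι : Type*} [Fintype ι] (p : ι → α → Prop)
    [∀ i, DecidablePred (p i)] (l : List α) (h : ∀ a ∈ l, ∃! i, p i a) :
    l.length = ∑ i, l.countP (fun a => decide (p i a)) := by
  induction l with
  | nil => simp
  | cons a l ih =>
    obtain ⟨i₀, hi₀, huniq⟩ := h a List.mem_cons_self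
    have hsingle : ∑ i, (if p i a then 1 else 0) = 1 := by
      rw [Finset.sum_eq_single i₀ (fun j _ hj => if_neg fun hja => hj (huniq j hja)) (by simp)]
      exact if_pos hi₀
    simp only [List.length_cons, List.countP_cons, decide_eq_true_eq, Finset.sum_add_distrib,
      hsingle, ← ih fun b hb => h b (List.mem_cons_of_mem a hb)]

namespace SimpleGraph

variable {V : Type*}

def crossings [DecidableEq V] (A B : Finset V) (u v : V) : ℕ :=
  (if u ∈ A ∧ v ∈ B then 1 else 0) + (if v ∈ A ∧ u ∈ B then 1 else 0)

theorem sum_sum_crossings [Fintype V] [DecidableEq V] (A B : Finset V) :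
    ∑ u, ∑ v, crossings A B u v = 2 * (#A * #B) := by
  have hprod (X Y : Finset V) : ∑ u, ∑ v, (if u ∈ X ∧ v ∈ Y then 1 else 0) = #X * #Y := by
    simp [ite_and]
  simp only [crossings, Finset.sum_add_distrib, hprod A B]
  simp only [and_comm (a := _ ∈ A), hprod B A]
  ring

theorem countP_mem_edges_eq_crossings [Fintype V] [DecidableEq V] {G : SimpleGraph V}
    {S : Finset (Sym2 V)} {A B : Finset V} (hAB : IsCompl A B)
    (hA : ∀ u v : V, u ∈ A → v ∈ A → ∀ p : G.Walk u v,
      p.length = G.dist u v → ∀ e ∈ p.edges, e ∉ S)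
    (hB : ∀ u v : V, u ∈ B → v ∈ B → ∀ p : G.Walk u v,
      p.length = G.dist u v → ∀ e ∈ p.edges, e ∉ S)
    (hcross : ∀ u v : V, u ∈ A → v ∈ B → ∀ p : G.Walk u v,
      p.length = G.dist u v → p.edges.countP (fun e => decide (e ∈ S)) = 1)
    {u v : V} (p : G.Walk u v) (hp : p.length = G.dist u v) :
    p.edges.countP (fun e => decide (e ∈ S)) = crossings A B u v := by
  obtain rfl := hAB.symm.eq_compl
  have hzero (h : ∀ e ∈ p.edges, e ∉ S) : p.edges.countP (fun e => decide (e ∈ S)) = 0 :=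
    List.countP_eq_zero.2 (by simpa using h)
  by_cases hu : u ∈ A <;> by_cases hv : v ∈ A
  · simp [crossings, hu, hv, hzero (hA u v hu hv p hp)]
  · simp [crossings, hu, hv, hcross u v hu (mem_compl.2 hv) p hp]
  · have hrev : p.reverse.length = G.dist v u := by rw [p.length_reverse, hp, dist_comm]
    rw [← List.countP_reverse, ← p.edges_reverse, hcross v u hv (mem_compl.2 hu) p.reverse hrev]
    simp [crossings, hu, hv]
  · simp [crossings, hu, hv, hzero (hB u v (mem_compl.2 hu) (mem_compl.2 hv) p hp)]

end SimpleGraph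

theorem stmt1_general {V : Type*} [Fintype V] [DecidableEq V] (G : SimpleGraph V) [DecidableRel G.Adj]
    (hconn : G.Connected) (m : ℕ) (S : Fin m → Finset (Sym2 V))
    (hpart : ∀ e ∈ G.edgeFinset, ∃! i : Fin m, e ∈ S i)
    (A B : Fin m → Finset V)
    (hdisj : ∀ i, Disjoint (A i) (B i)) (hcover : ∀ i, A i ∪ B i = Finset.univ)
    (hi : ∀ i, ∀ u v : V, u ∈ A i → v ∈ A i → ∀ p : G.Walk u v,
      p.length = G.dist u v → ∀ e ∈ p.edges, e ∉ S i)
    (hii : ∀ i, ∀ u v : V, u ∈ B i → v ∈ B i → ∀ p : G.Walk u v,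
      p.length = G.dist u v → ∀ e ∈ p.edges, e ∉ S i)
    (hiii : ∀ i, ∀ u v : V, u ∈ A i → v ∈ B i → ∀ p : G.Walk u v,
      p.length = G.dist u v → p.edges.countP (fun e => decide (e ∈ S i)) = 1) :
    ∑ u : V, ∑ v : V, G.dist u v = 2 * ∑ i : Fin m, (A i).card * (B i).card := by
  have hdist (u v : V) : G.dist u v = ∑ i, crossings (A i) (B i) u v := by
    obtain ⟨p, hp⟩ := hconn.exists_walk_length_eq_dist u v
    have hedges (e) (he : e ∈ p.edges) : ∃! i, e ∈ S i :=
      hpart e (G.mem_edgeFinset.2 (p.edges_subset_edgeSet he))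
    rw [← hp, ← p.length_edges, p.edges.length_eq_sum_countP_of_existsUnique _ hedges]
    exact Finset.sum_congr rfl fun i _ => countP_mem_edges_eq_crossings
      ⟨hdisj i, codisjoint_iff.2 (hcover i)⟩ (hi i) (hii i) (hiii i) p hp
  calc ∑ u, ∑ v, G.dist u v = ∑ i, ∑ u, ∑ v, crossings (A i) (B i) u v := by
        simp_rw [hdist, Finset.sum_comm (γ := Fin m)]
    _ = 2 * ∑ i, #(A i) * #(B i) := by simp_rw [sum_sum_crossings, Finset.mul_sum]

theorem stmt1 {V : Type*} [Fintype V] [DecidableEq V] (G : SimpleGraph V) [DecidableRel G.Adj]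
    (hconn : G.Connected) (m : ℕ) (S : Fin m → Finset (Sym2 V))
    (hsub : ∀ i, S i ⊆ G.edgeFinset)
    (hpart : ∀ e ∈ G.edgeFinset, ∃! i : Fin m, e ∈ S i)
    (A B : Fin m → Finset V)
    (hdisj : ∀ i, Disjoint (A i) (B i)) (hcover : ∀ i, A i ∪ B i = Finset.univ)
    (hAne : ∀ i, (A i).Nonempty) (hBne : ∀ i, (B i).Nonempty)
    (hcomp : ∀ i, ∀ u v : V, (G.deleteEdges ↑(S i)).Reachable u v ↔
      ((u ∈ A i ∧ v ∈ A i) ∨ (u ∈ B i ∧ v ∈ B i)))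
    (hi : ∀ i, ∀ u v : V, u ∈ A i → v ∈ A i → ∀ p : G.Walk u v,
      p.length = G.dist u v → ∀ e ∈ p.edges, e ∉ S i)
    (hii : ∀ i, ∀ u v : V, u ∈ B i → v ∈ B i → ∀ p : G.Walk u v,
      p.length = G.dist u v → ∀ e ∈ p.edges, e ∉ S i)
    (hiii : ∀ i, ∀ u v : V, u ∈ A i → v ∈ B i → ∀ p : G.Walk u v,
      p.length = G.dist u v → p.edges.countP (fun e => decide (e ∈ S i)) = 1) :
    ∑ u : V, ∑ v : V, G.dist u v = 2 * ∑ i : Fin m, (A i).card * (B i).card :=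
  stmt1_general G hconn m S hpart A B hdisj hcover hi hii hiii
end

section
/- Let G be a finite connected graph on n vertices and let {S₁,…,S_m} be a partition of the multiset E^k(G) (each edge of G repeated exactly k times) such that each S_i is an edge cut of G whose removal leaves two connected components G_i and G_i' satisfying: shortest paths within G_i avoid S_i, shortest paths within G_i' avoid S_i, and shortest paths between G_i and G_i' use exactly one edge of S_i. Then W(G) = (1/k) Σ_{i=1}^m |V(G_i)|·|V(G_i')|. -/
open SimpleGraph Finset

/-! Count the cuts crossed by a geodesic from `u` to `v`. Each cut `S i` meets it in one edge
if `u` and `v` lie on opposite sides of the cut and in no edge otherwise, while each of its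
`dist u v` edges lies in exactly `k` cuts. Hence `k * dist u v` is the number of cuts separating
`u` and `v`, and summing over ordered pairs counts each cut `2 |A i| |B i|` times. -/

theorem List.sum_countP_eq_mul_length {α ι : Type*} [Fintype ι] (P : ι → α → Prop)
    [∀ i, DecidablePred (P i)] {k : ℕ} (l : List α) (h : ∀ a ∈ l, #{i | P i a} = k) :
    ∑ i, l.countP (fun a => decide (P i a)) = k * l.length := by
  induction l with
  | nil => simp
  | cons a t ih =>
    simp only [List.countP_cons, List.length_cons, sum_add_distrib, decide_eq_true_eq,
      Finset.sum_boole, Nat.cast_id, h a List.mem_cons_self,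
      ih fun b hb => h b (List.mem_cons_of_mem a hb)]
    ring

theorem Finset.sum_sum_ite_mem_and_mem {α : Type*} [Fintype α] [DecidableEq α]
    (A B : Finset α) :
    ∑ u, ∑ v, (if u ∈ A ∧ v ∈ B then 1 else 0) = #A * #B := by
  simp [ite_and]

namespace SimpleGraph

variable {V : Type*} [Fintype V] [DecidableEq V] {G : SimpleGraph V}
  {S : Finset (Sym2 V)} {A B : Finset V}

theorem countP_edges_mem_cut_of_length_eq_dist (hdisj : Disjoint A B) (hcover : A ∪ B = univ)
    (hA : ∀ u v : V, u ∈ A → v ∈ A → ∀ p : G.Walk u v,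
      p.length = G.dist u v → ∀ e ∈ p.edges, e ∉ S)
    (hB : ∀ u v : V, u ∈ B → v ∈ B → ∀ p : G.Walk u v,
      p.length = G.dist u v → ∀ e ∈ p.edges, e ∉ S)
    (hAB : ∀ u v : V, u ∈ A → v ∈ B → ∀ p : G.Walk u v,
      p.length = G.dist u v → p.edges.countP (fun e => decide (e ∈ S)) = 1)
    {u v : V} (p : G.Walk u v) (hp : p.length = G.dist u v) :
    p.edges.countP (fun e => decide (e ∈ S)) =
      (if u ∈ A ∧ v ∈ B then 1 else 0) + (if u ∈ B ∧ v ∈ A then 1 else 0) := by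
  have hside (x : V) : x ∈ A ∧ x ∉ B ∨ x ∈ B ∧ x ∉ A := by
    have hx : x ∈ A ∪ B := hcover ▸ mem_univ x
    rw [mem_union] at hx
    exact hx.imp (fun h => ⟨h, Finset.disjoint_left.mp hdisj h⟩)
      fun h => ⟨h, Finset.disjoint_right.mp hdisj h⟩
  rcases hside u with ⟨hu, hu'⟩ | ⟨hu, hu'⟩ <;> rcases hside v with ⟨hv, hv'⟩ | ⟨hv, hv'⟩
  · simpa [hu', hv'] using hA u v hu hv p hp
  · simpa [hu, hv, hu'] using hAB u v hu hv p hp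
  · have hrev : p.reverse.length = G.dist v u := by rw [Walk.length_reverse, hp, dist_comm]
    simpa [hu, hv, hu'] using hAB v u hv hu p.reverse hrev
  · simpa [hu', hv'] using hB u v hu hv p hp

end SimpleGraph

theorem stmt4_general {V : Type*} [Fintype V] [DecidableEq V] (G : SimpleGraph V)
    [DecidableRel G.Adj]
    (hconn : G.Connected) (m k : ℕ) (S : Fin m → Finset (Sym2 V))
    (hmult : ∀ e ∈ G.edgeFinset,
      (Finset.univ.filter (fun i : Fin m => e ∈ S i)).card = k)
    (A B : Fin m → Finset V)
    (hdisj : ∀ i, Disjoint (A i) (B i)) (hcover : ∀ i, A i ∪ B i = Finset.univ)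
    (hi : ∀ i, ∀ u v : V, u ∈ A i → v ∈ A i → ∀ p : G.Walk u v,
      p.length = G.dist u v → ∀ e ∈ p.edges, e ∉ S i)
    (hii : ∀ i, ∀ u v : V, u ∈ B i → v ∈ B i → ∀ p : G.Walk u v,
      p.length = G.dist u v → ∀ e ∈ p.edges, e ∉ S i)
    (hiii : ∀ i, ∀ u v : V, u ∈ A i → v ∈ B i → ∀ p : G.Walk u v,
      p.length = G.dist u v → p.edges.countP (fun e => decide (e ∈ S i)) = 1) :
    k * ∑ u : V, ∑ v : V, G.dist u v = 2 * ∑ i : Fin m, (A i).card * (B i).card := by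
  have hdist (u v : V) : k * G.dist u v =
      ∑ i, ((if u ∈ A i ∧ v ∈ B i then 1 else 0) + (if u ∈ B i ∧ v ∈ A i then 1 else 0)) := by
    obtain ⟨p, hp⟩ := hconn.exists_walk_length_eq_dist u v
    rw [← hp, ← p.length_edges, ← List.sum_countP_eq_mul_length (fun i e => e ∈ S i) p.edges
      fun e he => hmult e (mem_edgeFinset.mpr (p.edges_subset_edgeSet he))]
    exact sum_congr rfl fun i _ => countP_edges_mem_cut_of_length_eq_dist (hdisj i) (hcover i)
      (hi i) (hii i) (hiii i) p hp
  calc k * ∑ u, ∑ v, G.dist u v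
      = ∑ i, ∑ u, ∑ v,
          ((if u ∈ A i ∧ v ∈ B i then 1 else 0) + (if u ∈ B i ∧ v ∈ A i then 1 else 0)) := by
        simp_rw [mul_sum, hdist]
        exact (sum_congr rfl fun u _ => sum_comm).trans sum_comm
    _ = 2 * ∑ i, #(A i) * #(B i) := by
        rw [mul_sum]
        refine sum_congr rfl fun i _ => ?_
        simp only [sum_add_distrib, sum_sum_ite_mem_and_mem]
        ring

theorem stmt4 {V : Type*} [Fintype V] [DecidableEq V] (G : SimpleGraph V)
    [DecidableRel G.Adj]
    (hconn : G.Connected) (m k : ℕ) (hk : 0 < k) (S : Fin m → Finset (Sym2 V))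
    (hsub : ∀ i, S i ⊆ G.edgeFinset)
    (hmult : ∀ e ∈ G.edgeFinset,
      (Finset.univ.filter (fun i : Fin m => e ∈ S i)).card = k)
    (A B : Fin m → Finset V)
    (hdisj : ∀ i, Disjoint (A i) (B i)) (hcover : ∀ i, A i ∪ B i = Finset.univ)
    (hAne : ∀ i, (A i).Nonempty) (hBne : ∀ i, (B i).Nonempty)
    (hcomp : ∀ i, ∀ u v : V, (G.deleteEdges ↑(S i)).Reachable u v ↔
      ((u ∈ A i ∧ v ∈ A i) ∨ (u ∈ B i ∧ v ∈ B i)))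
    (hi : ∀ i, ∀ u v : V, u ∈ A i → v ∈ A i → ∀ p : G.Walk u v,
      p.length = G.dist u v → ∀ e ∈ p.edges, e ∉ S i)
    (hii : ∀ i, ∀ u v : V, u ∈ B i → v ∈ B i → ∀ p : G.Walk u v,
      p.length = G.dist u v → ∀ e ∈ p.edges, e ∉ S i)
    (hiii : ∀ i, ∀ u v : V, u ∈ A i → v ∈ B i → ∀ p : G.Walk u v,
      p.length = G.dist u v → p.edges.countP (fun e => decide (e ∈ S i)) = 1) :
    k * ∑ u : V, ∑ v : V, G.dist u v = 2 * ∑ i : Fin m, (A i).card * (B i).card :=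
  stmt4_general G hconn m k S hmult A B hdisj hcover hi hii hiii
end

section
/- Let G be a finite connected graph and suppose there is a map β : V(G) → {0,1}^n and a positive integer λ such that the Hamming distance between β(u) and β(v) equals λ·d_G(u,v) for all vertices u,v (a scale-λ embedding into a hypercube). Then W(G) = (1/λ) Σ_{j=1}^n n₁(j)·n₂(j), where n₁(j) and n₂(j) are the numbers of vertices v with β(v) having j-th coordinate 0 and 1, respectively. -/
open SimpleGraph Finset

theorem stmt14 {V : Type*} [Fintype V] [DecidableEq V] (G : SimpleGraph V)
    (hconn : G.Connected) (n : ℕ) (β : V → (Fin n → Bool))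
    (lam : ℕ) (hlam : 0 < lam)
    (hscale : ∀ u v : V, hammingDist (β u) (β v) = lam * G.dist u v) :
    lam * ∑ u : V, ∑ v : V, G.dist u v =
      2 * ∑ j : Fin n,
        (Finset.univ.filter (fun v : V => β v j = false)).card *
        (Finset.univ.filter (fun v : V => β v j = true)).card := by
  classical
  have hham : ∀ u v : V, hammingDist (β u) (β v) =
      ∑ j : Fin n, if β u j ≠ β v j then 1 else 0 := by
    intro u v
    rw [hammingDist, Finset.card_filter]
  calc lam * ∑ u : V, ∑ v : V, G.dist u v
      = ∑ u : V, ∑ v : V, lam * G.dist u v := by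
        simp [Finset.mul_sum]
    _ = ∑ u : V, ∑ v : V, ∑ j : Fin n, if β u j ≠ β v j then 1 else 0 := by
        refine Finset.sum_congr rfl fun u _ => Finset.sum_congr rfl fun v _ => ?_
        rw [← hscale u v, hham u v]
    _ = ∑ j : Fin n, ∑ u : V, ∑ v : V, if β u j ≠ β v j then 1 else 0 := by
        rw [Finset.sum_congr rfl fun u _ => Finset.sum_comm, Finset.sum_comm]
    _ = ∑ j : Fin n, 2 * ((Finset.univ.filter (fun v : V => β v j = false)).card *
          (Finset.univ.filter (fun v : V => β v j = true)).card) := by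
        refine Finset.sum_congr rfl fun j _ => ?_
        have inner : ∀ u : V, (∑ v : V, if β u j ≠ β v j then 1 else 0) =
            if β u j = false
            then (Finset.univ.filter (fun v : V => β v j = true)).card
            else (Finset.univ.filter (fun v : V => β v j = false)).card := by
          intro u
          cases h : β u j with
          | false =>
            simp only [h, if_true]
            rw [Finset.card_filter]
            refine Finset.sum_congr rfl fun v _ => ?_
            cases hv : β v j <;> simp [hv]
          | true =>
            rw [if_neg (by simp [h])]
            rw [Finset.card_filter]
            refine Finset.sum_congr rfl fun v _ => ?_
            cases hv : β v j <;> simp [hv]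
        rw [Finset.sum_congr rfl fun u _ => inner u, Finset.sum_ite,
          Finset.sum_const, Finset.sum_const, smul_eq_mul, smul_eq_mul]
        have hfilt : (Finset.univ.filter (fun u : V => ¬ β u j = false)) =
            Finset.univ.filter (fun u : V => β u j = true) := by
          refine Finset.filter_congr fun u _ => ?_
          cases h : β u j <;> simp
        rw [hfilt]
        ring
    _ = 2 * ∑ j : Fin n,
        (Finset.univ.filter (fun v : V => β v j = false)).card *
        (Finset.univ.filter (fun v : V => β v j = true)).card := by
        rw [Finset.mul_sum]
end

section
/- If H is an isometric subgraph of the hypercube Q_n via an embedding β, then for each coordinate j used by the embedding, the set of edges of H whose endpoints differ in coordinate j forms an edge cut of H whose removal leaves two components, each convex in H. -/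
open SimpleGraph Finset

private lemma hd_sum {n : ℕ} (x y : Fin n → Bool) :
    hammingDist x y = ∑ i, (if x i ≠ y i then 1 else 0) := by
  simp [hammingDist, Finset.card_filter]

-- key: pointwise equality on a coordinate when distances add up
private lemma key {n : ℕ} (x w y : Fin n → Bool)
    (h : hammingDist x w + hammingDist w y = hammingDist x y) (j : Fin n)
    (hj : x j = y j) : w j = x j := by
  rw [hd_sum, hd_sum, hd_sum, ← Finset.sum_add_distrib] at h
  have hle : ∀ i ∈ Finset.univ, (if x i ≠ y i then 1 else 0) ≤
      (if x i ≠ w i then 1 else 0) + (if w i ≠ y i then 1 else 0) := by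
    intro i _
    rcases Bool.eq_false_or_eq_true (x i) with h1 | h1 <;>
      rcases Bool.eq_false_or_eq_true (w i) with h2 | h2 <;>
      rcases Bool.eq_false_or_eq_true (y i) with h3 | h3 <;> simp [h1, h2, h3]
  have := (Finset.sum_eq_sum_iff_of_le hle).mp h.symm j (Finset.mem_univ j)
  rcases Bool.eq_false_or_eq_true (x j) with h1 | h1 <;>
    rcases Bool.eq_false_or_eq_true (w j) with h2 | h2 <;>
      simp_all

private lemma conv {V : Type*} [Fintype V] [DecidableEq V] (H : SimpleGraph V)
    (hconn : H.Connected) {n : ℕ} (β : V → (Fin n → Bool))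
    (hiso : ∀ u v : V, hammingDist (β u) (β v) = H.dist u v) (j : Fin n)
    {u v : V} (hj : β u j = β v j) (p : H.Walk u v) (hp : p.length = H.dist u v) :
    ∀ w ∈ p.support, β w j = β u j := by
  intro w hw
  obtain ⟨q, r, rfl⟩ := SimpleGraph.Walk.mem_support_iff_exists_append.mp hw
  have h1 : H.dist u w ≤ q.length := SimpleGraph.dist_le q
  have h2 : H.dist w v ≤ r.length := SimpleGraph.dist_le r
  have h3 : H.dist u v ≤ H.dist u w + H.dist w v := hconn.dist_triangle
  have h4 : q.length + r.length = H.dist u v := by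
    rw [← hp, SimpleGraph.Walk.length_append]
  have hsum : H.dist u w + H.dist w v = H.dist u v := by omega
  exact key (β u) (β w) (β v)
    (by rw [hiso, hiso, hiso]; exact hsum) j hj

theorem stmt15 {V : Type*} [Fintype V] [DecidableEq V] (H : SimpleGraph V)
    (hconn : H.Connected) (n : ℕ) (β : V → (Fin n → Bool))
    (hinj : Function.Injective β)
    (hiso : ∀ u v : V, hammingDist (β u) (β v) = H.dist u v)
    (j : Fin n) (hused : ∃ u v : V, β u j ≠ β v j) :
    -- the cut consisting of the edges of `H` whose endpoints differ in coordinate `j`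
    (∀ u v : V,
      (H.deleteEdges {e : Sym2 V | ∃ a b : V, e = s(a, b) ∧ H.Adj a b ∧ β a j ≠ β b j}).Reachable u v ↔
      ((β u j = false ∧ β v j = false) ∨ (β u j = true ∧ β v j = true))) ∧
    -- both sides are convex in `H`
    (∀ u v : V, β u j = false → β v j = false → ∀ p : H.Walk u v,
      p.length = H.dist u v → ∀ w ∈ p.support, β w j = false) ∧
    (∀ u v : V, β u j = true → β v j = true → ∀ p : H.Walk u v,
      p.length = H.dist u v → ∀ w ∈ p.support, β w j = true) := by
  set S : Set (Sym2 V) := {e : Sym2 V | ∃ a b : V, e = s(a, b) ∧ H.Adj a b ∧ β a j ≠ β b j}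
    with hS
  refine ⟨?_, ?_, ?_⟩
  · intro u v
    constructor
    · intro hr
      have const : ∀ {a b : V} (q : (H.deleteEdges S).Walk a b), β a j = β b j := by
        intro a b q
        induction q with
        | nil => rfl
        | cons h q ih =>
          rename_i x y z
          have hxy : β x j = β y j := by
            by_contra hne
            exact (SimpleGraph.deleteEdges_adj.mp h).2
              ⟨x, y, rfl, (SimpleGraph.deleteEdges_adj.mp h).1, hne⟩
          exact hxy.trans ih
      have huv : β u j = β v j := hr.elim fun q => const q
      rcases Bool.eq_false_or_eq_true (β u j) with h1 | h1
      · exact Or.inr ⟨h1, huv ▸ h1⟩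
      · exact Or.inl ⟨h1, huv ▸ h1⟩
    · intro h
      have huv : β u j = β v j := by rcases h with ⟨h1, h2⟩ | ⟨h1, h2⟩ <;> rw [h1, h2]
      obtain ⟨p, hp⟩ := (hconn u v).exists_walk_length_eq_dist
      have hsup := conv H hconn β hiso j huv p hp
      have hedges : ∀ e ∈ p.edges, e ∉ S := by
        rintro e he ⟨a, b, rfl, hadj, hne⟩
        have ha : a ∈ p.support := p.fst_mem_support_of_mem_edges he
        have hb : b ∈ p.support := p.snd_mem_support_of_mem_edges he
        exact hne ((hsup a ha).trans (hsup b hb).symm)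
      exact ⟨p.toDeleteEdges S hedges⟩
  · intro u v h1 h2 p hp w hw
    exact (conv H hconn β hiso j (h1.trans h2.symm) p hp w hw).trans h1
  · intro u v h1 h2 p hp w hw
    exact (conv H hconn β hiso j (h1.trans h2.symm) p hp w hw).trans h1
end
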